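/- arXiv:1304.4773 — 2 statements merged into one kernel-verified Lean document; each statement's English description precedes it below -/
import Mathlib

section
/- Fix a penalty parameter λ > 0. The lasso estimator is defined for a sample Z = (X, y) with X ∈ ℝ^{n×p}, y ∈ ℝ^n as a minimizer over β ∈ ℝ^p of Σ_{i=1}^{n} (y_i − x_i'β)² + n λ Σ_{j=1}^{p} |β_j|. Then for every sample Z, the replacement finite-sample breakdown point of the lasso equals 1/n; in particular, replacing a single observation by suitably chosen values can make the Euclidean norm of every lasso minimizer arbitrarily large. -/
open Finset

/-- The `i`-th order statistic of the vector `r`, i.e. the `i`-th entry after sorting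
the entries of `r` in nondecreasing order. -/
noncomputable def orderStat {n : ℕ} (r : Fin n → ℝ) (i : Fin n) : ℝ :=
  r (Tuple.sort r i)

/-- The sum of the `h` smallest entries (order statistics) of the vector `r`. -/
noncomputable def trimmedSum {n : ℕ} (h : ℕ) (r : Fin n → ℝ) : ℝ :=
  ∑ i ∈ Finset.univ.filter (fun i : Fin n => (i : ℕ) < h), orderStat r i

/-- The L¹ norm of a coefficient vector `β ∈ ℝ^p`. -/
noncomputable def l1norm {p : ℕ} (β : Fin p → ℝ) : ℝ := ∑ j, |β j|

/-- The Euclidean (L²) norm of a coefficient vector `β ∈ ℝ^p`. -/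
noncomputable def euclNorm {p : ℕ} (β : Fin p → ℝ) : ℝ := Real.sqrt (∑ j, β j ^ 2)

/-- `Corrupt m X X' y y'` : the sample `(X', y')` is obtained from the sample `(X, y)` by
replacing (at most) `m` of the `n` observations `(xᵢ', yᵢ)` by arbitrary values. -/
def Corrupt {n p : ℕ} (m : ℕ) (X X' : Fin n → Fin p → ℝ) (y y' : Fin n → ℝ) : Prop :=
  ∃ s : Finset (Fin n), s.card ≤ m ∧ ∀ i ∉ s, (∀ j, X' i j = X i j) ∧ y' i = y i

/-- The lasso objective function `Σ_{i=1}^{n} (yᵢ − xᵢ'β)² + n λ Σ_j |β_j|`. -/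
noncomputable def QLasso {n p : ℕ} (lam : ℝ)
    (X : Fin n → Fin p → ℝ) (y : Fin n → ℝ) (β : Fin p → ℝ) : ℝ :=
  ∑ i, (y i - ∑ j, X i j * β j) ^ 2 + (n : ℝ) * lam * l1norm β

/-- `BreaksDown est X y m` : the supremum of `‖est(Z̃)‖₂` over all samples `Z̃` obtained
from `Z = (X, y)` by replacing `m` observations by arbitrary values is infinite. -/
def BreaksDown {n p : ℕ} (est : (Fin n → Fin p → ℝ) → (Fin n → ℝ) → Fin p → ℝ)
    (X : Fin n → Fin p → ℝ) (y : Fin n → ℝ) (m : ℕ) : Prop :=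
  ∀ M : ℝ, ∃ X' y', Corrupt m X X' y y' ∧ M < euclNorm (est X' y')

/-- The replacement finite-sample breakdown point
`ε*(est; Z) = min{ m/n : sup_{Z̃} ‖est(Z̃)‖₂ = ∞ }`. -/
noncomputable def breakdownPoint {n p : ℕ}
    (est : (Fin n → Fin p → ℝ) → (Fin n → ℝ) → Fin p → ℝ)
    (X : Fin n → Fin p → ℝ) (y : Fin n → ℝ) : ℝ :=
  ((sInf {m : ℕ | BreaksDown est X y m} : ℕ) : ℝ) / n

/-!
Replace one observation by `(c e_j, c t)`. The coefficient vector `t e_j` fits it exactly, so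
every lasso minimizer of the corrupted sample has objective at most the original objective of
`t e_j`, which does not depend on `c`. The corrupted observation alone contributes
`c² (t - β_j)²` to the objective of `β`, so for `c` large every minimizer has `β_j ≥ t - 1`,
and `t` is arbitrary. No estimator breaks down without corruption, so the breakdown point is `1/n`.
-/

open Function

lemma l1norm_nonneg {p : ℕ} (β : Fin p → ℝ) : 0 ≤ l1norm β :=
  sum_nonneg fun j _ => abs_nonneg (β j)

lemma abs_le_euclNorm {p : ℕ} (β : Fin p → ℝ) (j : Fin p) : |β j| ≤ euclNorm β := by
  rw [← Real.sqrt_sq_eq_abs]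
  exact Real.sqrt_le_sqrt (single_le_sum (fun k _ => sq_nonneg (β k)) (mem_univ j))

section Corruption

variable {n p : ℕ} {X X' : Fin n → Fin p → ℝ} {y y' : Fin n → ℝ}

lemma Corrupt.eq_of_zero (h : Corrupt 0 X X' y y') : X' = X ∧ y' = y := by
  obtain ⟨s, hs, hfix⟩ := h
  obtain rfl : s = ∅ := card_eq_zero.mp (Nat.le_zero.mp hs)
  exact ⟨funext fun i => funext (hfix i (notMem_empty i)).1,
    funext fun i => (hfix i (notMem_empty i)).2⟩

lemma corrupt_one_update (X : Fin n → Fin p → ℝ) (y : Fin n → ℝ) (i : Fin n)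
    (x : Fin p → ℝ) (v : ℝ) : Corrupt 1 X (update X i x) y (update y i v) :=
  ⟨{i}, by simp, fun k hk => by simp_all⟩

lemma not_breaksDown_zero (est : (Fin n → Fin p → ℝ) → (Fin n → ℝ) → Fin p → ℝ) :
    ¬ BreaksDown est X y 0 := by
  intro h
  obtain ⟨X', y', hcor, hlt⟩ := h (euclNorm (est X y))
  obtain ⟨rfl, rfl⟩ := hcor.eq_of_zero
  exact lt_irrefl _ hlt

lemma breakdownPoint_eq_one_div {est : (Fin n → Fin p → ℝ) → (Fin n → ℝ) → Fin p → ℝ}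
    (h : BreaksDown est X y 1) : breakdownPoint est X y = 1 / n := by
  have hle : sInf {m : ℕ | BreaksDown est X y m} ≤ 1 := Nat.sInf_le h
  have hne : sInf {m : ℕ | BreaksDown est X y m} ≠ 0 := fun h0 =>
    not_breaksDown_zero est (h0 ▸ Nat.sInf_mem ⟨1, h⟩)
  rw [breakdownPoint, show sInf {m : ℕ | BreaksDown est X y m} = 1 by omega, Nat.cast_one]

end Corruption

section Lasso

variable {n p : ℕ} {lam : ℝ} (X : Fin n → Fin p → ℝ) (y : Fin n → ℝ)

lemma sq_residual_le_qLasso (hlam : 0 ≤ lam) (i : Fin n) (β : Fin p → ℝ) :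
    (y i - ∑ j, X i j * β j) ^ 2 ≤ QLasso lam X y β := by
  have hres := single_le_sum (fun k _ => sq_nonneg (y k - ∑ j, X k j * β j)) (mem_univ i)
  have hpen : 0 ≤ (n : ℝ) * lam * l1norm β := by
    have := l1norm_nonneg β
    positivity
  rw [QLasso]
  linarith

lemma qLasso_update_single_le (i : Fin n) (j : Fin p) (c t : ℝ) :
    QLasso lam (update X i (Pi.single j c)) (update y i (c * t)) (Pi.single j t) ≤
      QLasso lam X y (Pi.single j t) := by
  unfold QLasso
  refine add_le_add_left (sum_le_sum fun k _ => ?_) _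
  rcases eq_or_ne k i with rfl | hk
  · simpa [Pi.single_apply] using sq_nonneg _
  · simp [hk, Pi.single_apply]

lemma sub_one_le_apply_of_minimizes_qLasso_update (hlam : 0 ≤ lam) (i : Fin n) (j : Fin p)
    {c t : ℝ} (hc : 1 ≤ c) (hQ : QLasso lam X y (Pi.single j t) ≤ c ^ 2) {β : Fin p → ℝ}
    (hβ : ∀ β', QLasso lam (update X i (Pi.single j c)) (update y i (c * t)) β ≤
      QLasso lam (update X i (Pi.single j c)) (update y i (c * t)) β') :
    t - 1 ≤ β j := by
  have hfit : c ^ 2 * (t - β j) ^ 2 ≤ c ^ 2 :=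
    calc c ^ 2 * (t - β j) ^ 2
        = (update y i (c * t) i - ∑ k, update X i (Pi.single j c) i k * β k) ^ 2 := by
          simp [Pi.single_apply]; ring
      _ ≤ QLasso lam (update X i (Pi.single j c)) (update y i (c * t)) β :=
          sq_residual_le_qLasso _ _ hlam i β
      _ ≤ QLasso lam (update X i (Pi.single j c)) (update y i (c * t)) (Pi.single j t) :=
          hβ _
      _ ≤ c ^ 2 := (qLasso_update_single_le X y i j c t).trans hQ
  have hdist : (t - β j) ^ 2 ≤ 1 :=
    le_of_mul_le_mul_left (by rwa [mul_one]) (pow_pos (by linarith) 2)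
  nlinarith

lemma exists_corrupt_one_lasso_minimizers_gt (hlam : 0 ≤ lam) (i : Fin n) (j : Fin p)
    (M : ℝ) :
    ∃ X' y', Corrupt 1 X X' y y' ∧
      ∀ β : Fin p → ℝ, (∀ β' : Fin p → ℝ, QLasso lam X' y' β ≤ QLasso lam X' y' β') →
        M < euclNorm β := by
  set c := |QLasso lam X y (Pi.single j (M + 2))| + 1
  have hc : 1 ≤ c := le_add_of_nonneg_left (abs_nonneg _)
  have hQ : QLasso lam X y (Pi.single j (M + 2)) ≤ c ^ 2 := by
    nlinarith [le_abs_self (QLasso lam X y (Pi.single j (M + 2)))]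
  refine ⟨_, _, corrupt_one_update X y i (Pi.single j c) (c * (M + 2)), fun β hβ => ?_⟩
  have := sub_one_le_apply_of_minimizes_qLasso_update X y hlam i j hc hQ hβ
  linarith [le_abs_self (β j), abs_le_euclNorm β j]

end Lasso

/-- The lasso estimator with penalty parameter `λ > 0`, i.e. any estimator that, for every
sample, minimizes the lasso objective, has replacement finite-sample breakdown point `1/n`
at every sample `Z = (X, y)`; in particular, replacing a single observation by suitably
chosen values can make the Euclidean norm of every lasso minimizer arbitrarily large. -/
theorem breakdown_point_lasso
    {n p : ℕ} (hn : 1 ≤ n) (hp : 1 ≤ p)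
    (lam : ℝ) (hlam : 0 < lam)
    (est : (Fin n → Fin p → ℝ) → (Fin n → ℝ) → Fin p → ℝ)
    (hest : ∀ (X : Fin n → Fin p → ℝ) (y : Fin n → ℝ) (β : Fin p → ℝ),
      QLasso lam X y (est X y) ≤ QLasso lam X y β)
    (X : Fin n → Fin p → ℝ) (y : Fin n → ℝ) :
    breakdownPoint est X y = 1 / n ∧
    ∀ M : ℝ, ∃ X' y', Corrupt 1 X X' y y' ∧
      ∀ β : Fin p → ℝ, (∀ β' : Fin p → ℝ, QLasso lam X' y' β ≤ QLasso lam X' y' β') →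
        M < euclNorm β := by
  have hunbounded := exists_corrupt_one_lasso_minimizers_gt X y hlam.le ⟨0, hn⟩ ⟨0, hp⟩
  refine ⟨breakdownPoint_eq_one_div fun M => ?_, hunbounded⟩
  obtain ⟨X', y', hcor, hgt⟩ := hunbounded M
  exact ⟨X', y', hcor, hgt _ (hest X' y')⟩
end

section
/- Let ρ: ℝ → ℝ be a convex and symmetric loss function with ρ(0) = 0 and ρ(x) > 0 for x ≠ 0, let λ > 0 and 1 ≤ h ≤ n. Let Z = (X, y) be a sample of n observations. Then there exists a constant M (depending only on Z, ρ, λ, h, but not on the contamination) such that for every corrupted sample Z̃ obtained from Z by replacing at most m ≤ n − h of the original observations by arbitrary values, every minimizer β̂ of Q_{Z̃}(β) = Σ_{i=1}^{h} (ρ(ỹ − X̃β))_{i:n} + h λ Σ_{j=1}^{p} |β_j| satisfies ‖β̂‖₂ ≤ M. Consequently, the breakdown point of this estimator is at least (n − h + 1)/n. -/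
/-! Since `ρ ≥ 0`, the penalty alone gives `hλ‖β̂‖₁ ≤ Q(β̂) ≤ Q(0)`. At `β = 0` the residuals are
the responses, and a trimmed sum of nonnegative terms is at most the sum over any `h` of them; taking
the at least `h` uncorrupted observations bounds `Q(0)` by `Σᵢ ρ(yᵢ)`, a quantity of the clean sample
alone. Finally `‖·‖₂ ≤ ‖·‖₁`. -/

open Finset

/-- The trimmed penalized objective function
`Q_Z̃(β) = Σ_{i=1}^{h} (ρ(ỹ − X̃β))_{i:n} + h λ Σ_j |β_j|` with loss `ρ`. -/
noncomputable def QGen {n p : ℕ} (ρ : ℝ → ℝ) (lam : ℝ) (h : ℕ)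
    (X : Fin n → Fin p → ℝ) (y : Fin n → ℝ) (β : Fin p → ℝ) : ℝ :=
  trimmedSum h (fun i => ρ (y i - ∑ j, X i j * β j)) + (h : ℝ) * lam * l1norm β

lemma Fin.val_le_of_strictMono {h n : ℕ} {f : Fin h → Fin n} (hf : StrictMono f) (k : Fin h) :
    (k : ℕ) ≤ f k := by
  simpa using Finset.card_le_card_of_injOn f (s := Iio k) (t := Iio (f k))
    (fun a ha => by simpa using hf (by simpa using ha)) hf.injective.injOn

lemma Fin.filter_val_lt_eq_map_castLEEmb {h n : ℕ} (hhn : h ≤ n) :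
    univ.filter (fun i : Fin n => (i : ℕ) < h) = univ.map (Fin.castLEEmb hhn) := by
  ext i
  simp only [mem_filter, mem_univ, true_and, mem_map, Fin.castLEEmb_apply]
  exact ⟨fun hi => ⟨⟨i, hi⟩, rfl⟩, by rintro ⟨k, rfl⟩; exact k.2⟩

lemma Monotone.sum_filter_val_lt_le_sum {M : Type*} [AddCommMonoid M] [PartialOrder M]
    [IsOrderedAddMonoid M] {n h : ℕ} {g : Fin n → M} (hg : Monotone g) {S : Finset (Fin n)}
    (hS : #S = h) :
    ∑ i ∈ univ.filter (fun i : Fin n => (i : ℕ) < h), g i ≤ ∑ i ∈ S, g i := by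
  have hhn : h ≤ n := by simpa [hS] using card_le_univ S
  have hS_sum := sum_map univ (S.orderEmbOfFin hS).toEmbedding g
  rw [map_orderEmbOfFin_univ] at hS_sum
  rw [Fin.filter_val_lt_eq_map_castLEEmb hhn, sum_map, hS_sum]
  exact sum_le_sum fun k _ => hg (Fin.val_le_of_strictMono (S.orderEmbOfFin hS).strictMono k)

lemma trimmedSum_le_sum_of_card_eq {n h : ℕ} (r : Fin n → ℝ) {S : Finset (Fin n)}
    (hS : #S = h) : trimmedSum h r ≤ ∑ i ∈ S, r i := by
  have hsorted : ∑ i ∈ S, r i = ∑ i ∈ S.map (Tuple.sort r).symm.toEmbedding, orderStat r i := by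
    simp [sum_map, orderStat]
  rw [hsorted]
  exact (Tuple.monotone_sort r).sum_filter_val_lt_le_sum (by rw [card_map, hS])

lemma trimmedSum_le_sum_of_le_card {n h : ℕ} {r : Fin n → ℝ} (hr : ∀ i, 0 ≤ r i)
    {T : Finset (Fin n)} (hT : h ≤ #T) : trimmedSum h r ≤ ∑ i ∈ T, r i := by
  obtain ⟨S, hST, hS⟩ := T.exists_subset_card_eq hT
  exact (trimmedSum_le_sum_of_card_eq r hS).trans
    (sum_le_sum_of_subset_of_nonneg hST fun i _ _ => hr i)

lemma trimmedSum_nonneg {n : ℕ} (h : ℕ) {r : Fin n → ℝ} (hr : ∀ i, 0 ≤ r i) :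
    0 ≤ trimmedSum h r :=
  sum_nonneg fun _ _ => hr _

lemma euclNorm_le_l1norm {p : ℕ} (β : Fin p → ℝ) : euclNorm β ≤ l1norm β := by
  refine (Real.sqrt_le_left (sum_nonneg fun j _ => abs_nonneg (β j))).2 ?_
  simpa [sq_abs] using sum_sq_le_sq_sum_of_nonneg (s := univ) fun j _ => abs_nonneg (β j)

section QGen

variable {n p h : ℕ} {ρ : ℝ → ℝ} {lam : ℝ}

lemma QGen_zero_le_of_corrupt (hhn : h ≤ n) (hρ : ∀ x, 0 ≤ ρ x) {m : ℕ} (hm : m ≤ n - h)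
    {X X' : Fin n → Fin p → ℝ} {y y' : Fin n → ℝ} (hc : Corrupt m X X' y y') :
    QGen ρ lam h X' y' 0 ≤ ∑ i, ρ (y i) := by
  obtain ⟨s, hs, hclean⟩ := hc
  have hcard : h ≤ #sᶜ := by rw [card_compl, Fintype.card_fin]; omega
  calc QGen ρ lam h X' y' 0 = trimmedSum h (fun i => ρ (y' i)) := by simp [QGen, l1norm]
    _ ≤ ∑ i ∈ sᶜ, ρ (y' i) := trimmedSum_le_sum_of_le_card (fun _ => hρ _) hcard
    _ = ∑ i ∈ sᶜ, ρ (y i) := sum_congr rfl fun i hi => by rw [(hclean i (mem_compl.1 hi)).2]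
    _ ≤ ∑ i, ρ (y i) := sum_le_sum_of_subset_of_nonneg (subset_univ _) fun _ _ _ => hρ _

lemma mul_l1norm_le_QGen (hρ : ∀ x, 0 ≤ ρ x) (X : Fin n → Fin p → ℝ) (y : Fin n → ℝ)
    (β : Fin p → ℝ) : (h : ℝ) * lam * l1norm β ≤ QGen ρ lam h X y β :=
  le_add_of_nonneg_left (trimmedSum_nonneg h fun _ => hρ _)

lemma euclNorm_le_of_corrupt_of_minimizer (hh1 : 1 ≤ h) (hhn : h ≤ n) (hρ : ∀ x, 0 ≤ ρ x)
    (hlam : 0 < lam) {m : ℕ} (hm : m ≤ n - h) {X X' : Fin n → Fin p → ℝ} {y y' : Fin n → ℝ}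
    (hc : Corrupt m X X' y y') {βhat : Fin p → ℝ}
    (hmin : ∀ β, QGen ρ lam h X' y' βhat ≤ QGen ρ lam h X' y' β) :
    euclNorm βhat ≤ (∑ i, ρ (y i)) / (h * lam) := by
  have hhlam : 0 < (h : ℝ) * lam := mul_pos (by exact_mod_cast hh1) hlam
  calc euclNorm βhat ≤ l1norm βhat := euclNorm_le_l1norm βhat
    _ ≤ (∑ i, ρ (y i)) / (h * lam) := by
      rw [le_div_iff₀ hhlam, mul_comm]
      exact (mul_l1norm_le_QGen hρ X' y' βhat).trans
        ((hmin 0).trans (QGen_zero_le_of_corrupt hhn hρ hm hc))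

end QGen

lemma not_breaksDown_of_forall_euclNorm_le {n p m : ℕ}
    {est : (Fin n → Fin p → ℝ) → (Fin n → ℝ) → Fin p → ℝ} {X : Fin n → Fin p → ℝ}
    {y : Fin n → ℝ} {M : ℝ} (hM : ∀ X' y', Corrupt m X X' y y' → euclNorm (est X' y') ≤ M) :
    ¬ BreaksDown est X y m := fun hbd =>
  let ⟨X', y', hc, hgt⟩ := hbd M
  hgt.not_ge (hM X' y' hc)

theorem trimmed_penalized_no_breakdown_below_general
    {n p h : ℕ} (hh1 : 1 ≤ h) (hhn : h ≤ n)
    (ρ : ℝ → ℝ) (hzero : ρ 0 = 0) (hpos : ∀ x : ℝ, x ≠ 0 → 0 < ρ x)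
    (lam : ℝ) (hlam : 0 < lam)
    (X : Fin n → Fin p → ℝ) (y : Fin n → ℝ) :
    ∃ M : ℝ,
      (∀ m : ℕ, m ≤ n - h → ∀ (X' : Fin n → Fin p → ℝ) (y' : Fin n → ℝ),
        Corrupt m X X' y y' →
        ∀ βhat : Fin p → ℝ,
          (∀ β : Fin p → ℝ, QGen ρ lam h X' y' βhat ≤ QGen ρ lam h X' y' β) →
          euclNorm βhat ≤ M) ∧
      (∀ est : (Fin n → Fin p → ℝ) → (Fin n → ℝ) → Fin p → ℝ,
        (∀ (X₀ : Fin n → Fin p → ℝ) (y₀ : Fin n → ℝ) (β : Fin p → ℝ),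
          QGen ρ lam h X₀ y₀ (est X₀ y₀) ≤ QGen ρ lam h X₀ y₀ β) →
        ∀ m : ℕ, BreaksDown est X y m → n - h + 1 ≤ m) := by
  have hρ : ∀ x, 0 ≤ ρ x := fun x =>
    (eq_or_ne x 0).elim (fun hx => hx ▸ hzero.ge) fun hx => (hpos x hx).le
  have hbound := fun m (hm : m ≤ n - h) X' y' (hc : Corrupt m X X' y y') βhat
    (hmin : ∀ β, QGen ρ lam h X' y' βhat ≤ QGen ρ lam h X' y' β) =>
    euclNorm_le_of_corrupt_of_minimizer hh1 hhn hρ hlam hm hc hmin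
  refine ⟨_, hbound, fun est hest m hbd => ?_⟩
  by_contra! hlt
  exact not_breaksDown_of_forall_euclNorm_le
    (fun X' y' hc => hbound m (by omega) X' y' hc _ (hest X' y')) hbd

/-- Lower-bound half of Theorem 1: there is a constant `M`, depending only on the sample
`Z = (X, y)`, the loss `ρ`, the penalty `λ` and the subset size `h`, such that for every
corrupted sample obtained by replacing at most `m ≤ n − h` observations, every minimizer of
the trimmed penalized objective has Euclidean norm at most `M`. Consequently, for any
estimator that always picks a minimizer, replacing at most `n − h` observations cannot cause
breakdown, i.e. the breakdown point is at least `(n − h + 1)/n`. -/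
theorem trimmed_penalized_no_breakdown_below
    {n p h : ℕ} (hh1 : 1 ≤ h) (hhn : h ≤ n)
    (ρ : ℝ → ℝ) (hconv : ConvexOn ℝ Set.univ ρ) (hsym : ∀ x : ℝ, ρ (-x) = ρ x)
    (hzero : ρ 0 = 0) (hpos : ∀ x : ℝ, x ≠ 0 → 0 < ρ x)
    (lam : ℝ) (hlam : 0 < lam)
    (X : Fin n → Fin p → ℝ) (y : Fin n → ℝ) :
    ∃ M : ℝ,
      (∀ m : ℕ, m ≤ n - h → ∀ (X' : Fin n → Fin p → ℝ) (y' : Fin n → ℝ),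
        Corrupt m X X' y y' →
        ∀ βhat : Fin p → ℝ,
          (∀ β : Fin p → ℝ, QGen ρ lam h X' y' βhat ≤ QGen ρ lam h X' y' β) →
          euclNorm βhat ≤ M) ∧
      (∀ est : (Fin n → Fin p → ℝ) → (Fin n → ℝ) → Fin p → ℝ,
        (∀ (X₀ : Fin n → Fin p → ℝ) (y₀ : Fin n → ℝ) (β : Fin p → ℝ),
          QGen ρ lam h X₀ y₀ (est X₀ y₀) ≤ QGen ρ lam h X₀ y₀ β) →
        ∀ m : ℕ, BreaksDown est X y m → n - h + 1 ≤ m) :=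
  trimmed_penalized_no_breakdown_below_general hh1 hhn ρ hzero hpos lam hlam X y
end
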